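/- arXiv:2103.11623 — 5 statements merged into one kernel-verified Lean document; each statement's English description precedes it below -/
import Mathlib

section
/- Let N, Q be positive integers, let p : {1,…,N} → ℝ be nonincreasing with p_n > 0 for all n (file popularities sorted in decreasing order), and let L : {1,…,Q} → ℝ be nonincreasing with L_q > 0 for all q (sub-library cache redundancies sorted in decreasing order). Let f, g : {1,…,N} → {1,…,Q} be two assignments of files to sub-libraries such that for every q the fibers have equal sizes, |f^{-1}(q)| = |g^{-1}(q)|, and such that g is monotone nondecreasing (so g assigns consecutive indices to each sub-library, with the most popular files going to the sub-libraries of largest redundancy). Then Σ_{n=1}^N p_n / L_{g(n)} ≤ Σ_{n=1}^N p_n / L_{f(n)}. Hence, for any number of sub-libraries Q, the sub-library segmentation producing the optimal expected delay consists of files with consecutive indices. -/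
/-! Equal fiber sizes make `f` a rearrangement `g ∘ σ` of `g`. Since `p` is antitone while
`n ↦ 1 / L (g n)` is monotone, the two sequences are oppositely ordered, and the rearrangement
inequality says that no permutation `σ` can lower `∑ n, p n / L (g n)`. -/

open Finset

theorem exists_perm_comp_eq_of_card_filter_eq {α β : Type*} [Fintype α] [DecidableEq β]
    (f g : α → β) (h : ∀ b, #{a | f a = b} = #{a | g a = b}) :
    ∃ σ : Equiv.Perm α, ∀ a, g (σ a) = f a := by
  have hcard (b : β) : Fintype.card {a // f a = b} = Fintype.card {a // g a = b} := by
    simpa only [Fintype.card_subtype] using h b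
  exact ⟨Equiv.ofFiberEquiv fun b => Fintype.equivOfCardEq (hcard b), Equiv.ofFiberEquiv_map _⟩

theorem stmt_2_general (N Q : ℕ)
    (p : Fin N → ℝ) (L : Fin Q → ℝ)
    (hp : Antitone p)
    (hL : Antitone L) (hLpos : ∀ q, 0 < L q)
    (f g : Fin N → Fin Q)
    (hfib : ∀ q : Fin Q,
      (Finset.univ.filter (fun n => f n = q)).card =
        (Finset.univ.filter (fun n => g n = q)).card)
    (hg : Monotone g) :
    ∑ n, p n / L (g n) ≤ ∑ n, p n / L (f n) := by
  obtain ⟨σ, hσ⟩ := exists_perm_comp_eq_of_card_filter_eq f g hfib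
  have hLg : Monotone fun n => (L (g n))⁻¹ := fun i j hij => inv_anti₀ (hLpos _) (hL (hg hij))
  have key := (hp.antivary hLg).sum_mul_le_sum_mul_comp_perm (σ := σ)
  simpa only [hσ, div_eq_mul_inv] using key

/-- For any number of sub-libraries `Q`, among all assignments of files to sub-libraries
with prescribed fiber sizes, the monotone (consecutive-indices) assignment minimizes the
expected delay `∑ n, p n / L (f n)`, when popularities `p` and redundancies `L` are
nonincreasing and positive. -/
theorem stmt_2 (N Q : ℕ) (hN : 0 < N) (hQ : 0 < Q)
    (p : Fin N → ℝ) (L : Fin Q → ℝ)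
    (hp : Antitone p) (hppos : ∀ n, 0 < p n)
    (hL : Antitone L) (hLpos : ∀ q, 0 < L q)
    (f g : Fin N → Fin Q)
    (hfib : ∀ q : Fin Q,
      (Finset.univ.filter (fun n => f n = q)).card =
        (Finset.univ.filter (fun n => g n = q)).card)
    (hg : Monotone g) :
    ∑ n, p n / L (g n) ≤ ∑ n, p n / L (f n) :=
  stmt_2_general N Q p L hp hL hLpos f g hfib hg
end

section
/- Let N be a positive integer, p : {1,…,N} → ℝ a popularity vector with p_n ≥ 0, let c ≥ 0 (the constant c = K(1−γ)/(1+Λγ)), and let M > 0 be the transmitter cache budget (M = L·N). Suppose Q ≥ 2, 0 ≤ n_1 < n_2 < ⋯ < n_Q = N is a consecutive segmentation with n_Q − n_{Q−1} ≥ 2, and L_2,…,L_Q > 0 satisfy the cache constraint n_1 + Σ_{q=2}^{Q} L_q (n_q − n_{q−1}) ≤ M. Then there exist a segmentation 0 ≤ n'_1 < ⋯ < n'_{Q+1} = N with Q+1 parts and redundancies L'_2,…,L'_{Q+1} > 0 satisfying n'_1 + Σ_{q=2}^{Q+1} L'_q (n'_q − n'_{q−1}) ≤ M such that the expected delay is unchanged: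 n'_1 + c·Σ_{q=2}^{Q+1} π'_q / L'_q = n_1 + c·Σ_{q=2}^{Q} π_q / L_q, where π_q = Σ_{n=n_{q−1}+1}^{n_q} p_n and π'_q is defined analogously. Consequently, in the absence of the upper-bound constraint on L, the optimal expected delay is monotonically nonincreasing in the number of sub-libraries Q. -/
/-!
Split the last sub-library `(n_{Q-1}, n_Q]` at `n_Q - 1` and give both halves the old
redundancy `L_Q`. The cache cost `L_Q (b - a)` and the delay contribution `π / L_Q` of a
sub-library are both additive under splitting an interval, so budget and delay are unchanged.
-/

open Finset

def splitLast (n : ℕ → ℕ) (Q k : ℕ) : ℕ → ℕ :=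
  fun q => if q < Q then n q else if q = Q then k else n Q

section splitLast

variable (n : ℕ → ℕ) {Q : ℕ} (k : ℕ)

lemma splitLast_of_lt {q : ℕ} (hq : q < Q) : splitLast n Q k q = n q := if_pos hq

lemma splitLast_self : splitLast n Q k Q = k := by simp [splitLast]

lemma splitLast_succ_self : splitLast n Q k (Q + 1) = n Q := by simp [splitLast]

variable {n k}

lemma splitLast_lt_succ (hmono : ∀ q, 1 ≤ q → q < Q → n q < n (q + 1))
    (hk₁ : n (Q - 1) < k) (hk₂ : k < n Q) :
    ∀ q, 1 ≤ q → q < Q + 1 → splitLast n Q k q < splitLast n Q k (q + 1) := by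
  intro q hq₁ hq₂
  rcases lt_trichotomy (q + 1) Q with h | h | h
  · rw [splitLast_of_lt n k h, splitLast_of_lt n k (by omega)]
    exact hmono q hq₁ (by omega)
  · rw [h, splitLast_self, splitLast_of_lt n k (by omega)]
    rwa [show q = Q - 1 by omega]
  · rw [show q = Q by omega, splitLast_self, splitLast_succ_self]
    exact hk₂

lemma sum_Icc_splitLast {α β : Type*} [AddCommMonoid β] (F : ℕ → ℕ → α → β) (L : ℕ → α)
    (hQ : 2 ≤ Q) (hF : F (n (Q - 1)) k (L Q) + F k (n Q) (L Q) = F (n (Q - 1)) (n Q) (L Q)) :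
    ∑ q ∈ Icc 2 (Q + 1),
        F (splitLast n Q k (q - 1)) (splitLast n Q k q) (Function.update L (Q + 1) (L Q) q)
      = ∑ q ∈ Icc 2 Q, F (n (q - 1)) (n q) (L q) := by
  obtain ⟨m, rfl⟩ : ∃ m, Q = m + 1 := ⟨Q - 1, by omega⟩
  have hinit : ∀ q ∈ Icc 2 m,
      F (splitLast n (m + 1) k (q - 1)) (splitLast n (m + 1) k q)
          (Function.update L (m + 1 + 1) (L (m + 1)) q) = F (n (q - 1)) (n q) (L q) := by
    intro q hq
    rw [mem_Icc] at hq
    rw [splitLast_of_lt n k (by omega), splitLast_of_lt n k (by omega),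
      Function.update_of_ne (by omega)]
  rw [sum_Icc_succ_top (by omega), sum_Icc_succ_top (by omega), sum_Icc_succ_top (by omega),
    sum_congr rfl hinit, add_assoc, ← hF]
  simp only [Nat.add_sub_cancel, splitLast_self, splitLast_succ_self,
    splitLast_of_lt n k (Nat.lt_succ_self m), Function.update_self,
    Function.update_of_ne (Nat.succ_ne_self (m + 1)).symm]

end splitLast

theorem stmt_9_general (N : ℕ) (p : ℕ → ℝ)
    (c : ℝ) (M : ℝ)
    (Q : ℕ) (hQ : 2 ≤ Q) (n : ℕ → ℕ) (L : ℕ → ℝ)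
    (hmono : ∀ q, 1 ≤ q → q < Q → n q < n (q + 1))
    (hlast : n Q = N) (hbig : n (Q - 1) + 2 ≤ n Q)
    (hLpos : ∀ q, 2 ≤ q → q ≤ Q → 0 < L q)
    (hbudget : (n 1 : ℝ) + ∑ q ∈ Finset.Icc 2 Q, L q * ((n q : ℝ) - n (q - 1)) ≤ M) :
    ∃ (n' : ℕ → ℕ) (L' : ℕ → ℝ),
      (∀ q, 1 ≤ q → q < Q + 1 → n' q < n' (q + 1)) ∧
      n' (Q + 1) = N ∧
      (∀ q, 2 ≤ q → q ≤ Q + 1 → 0 < L' q) ∧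
      ((n' 1 : ℝ) + ∑ q ∈ Finset.Icc 2 (Q + 1), L' q * ((n' q : ℝ) - n' (q - 1)) ≤ M) ∧
      ((n' 1 : ℝ) + c * ∑ q ∈ Finset.Icc 2 (Q + 1),
          (∑ i ∈ Finset.Ioc (n' (q - 1)) (n' q), p i) / L' q
        = (n 1 : ℝ) + c * ∑ q ∈ Finset.Icc 2 Q,
            (∑ i ∈ Finset.Ioc (n (q - 1)) (n q), p i) / L q) := by
  have hk₁ : n (Q - 1) ≤ n Q - 1 := by omega
  have hk₂ : n Q - 1 ≤ n Q := by omega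
  have hfirst : splitLast n Q (n Q - 1) 1 = n 1 := splitLast_of_lt n _ (by omega)
  refine ⟨splitLast n Q (n Q - 1), Function.update L (Q + 1) (L Q),
    splitLast_lt_succ hmono (by omega) (by omega), hlast ▸ splitLast_succ_self n _, ?_, ?_, ?_⟩
  · intro q hq₁ hq₂
    rcases eq_or_ne q (Q + 1) with rfl | hq
    · rw [Function.update_self]
      exact hLpos Q hQ le_rfl
    · rw [Function.update_of_ne hq]
      exact hLpos q hq₁ (by omega)
  · rwa [hfirst, sum_Icc_splitLast (fun a b l => l * ((b : ℝ) - a)) L hQ (by ring)]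
  · rw [hfirst, sum_Icc_splitLast (fun a b l => (∑ i ∈ Ioc a b, p i) / l) L hQ
      (by rw [← add_div, sum_Ioc_consecutive _ hk₁ hk₂])]

/-- Splitting a sub-library: given a consecutive segmentation into `Q` parts whose last
part has at least two files, together with feasible cache redundancies, there is a
consecutive segmentation into `Q+1` parts with feasible redundancies achieving exactly
the same expected delay.  Hence, absent the upper-bound constraint on `L`, the optimal
expected delay is monotonically nonincreasing in the number of sub-libraries `Q`. -/
theorem stmt_9 (N : ℕ) (hN : 0 < N) (p : ℕ → ℝ) (hp : ∀ n, 0 ≤ p n)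
    (c : ℝ) (hc : 0 ≤ c) (M : ℝ) (hM : 0 < M)
    (Q : ℕ) (hQ : 2 ≤ Q) (n : ℕ → ℕ) (L : ℕ → ℝ)
    (hmono : ∀ q, 1 ≤ q → q < Q → n q < n (q + 1))
    (hlast : n Q = N) (hbig : n (Q - 1) + 2 ≤ n Q)
    (hLpos : ∀ q, 2 ≤ q → q ≤ Q → 0 < L q)
    (hbudget : (n 1 : ℝ) + ∑ q ∈ Finset.Icc 2 Q, L q * ((n q : ℝ) - n (q - 1)) ≤ M) :
    ∃ (n' : ℕ → ℕ) (L' : ℕ → ℝ),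
      (∀ q, 1 ≤ q → q < Q + 1 → n' q < n' (q + 1)) ∧
      n' (Q + 1) = N ∧
      (∀ q, 2 ≤ q → q ≤ Q + 1 → 0 < L' q) ∧
      ((n' 1 : ℝ) + ∑ q ∈ Finset.Icc 2 (Q + 1), L' q * ((n' q : ℝ) - n' (q - 1)) ≤ M) ∧
      ((n' 1 : ℝ) + c * ∑ q ∈ Finset.Icc 2 (Q + 1),
          (∑ i ∈ Finset.Ioc (n' (q - 1)) (n' q), p i) / L' q
        = (n 1 : ℝ) + c * ∑ q ∈ Finset.Icc 2 Q,
            (∑ i ∈ Finset.Ioc (n (q - 1)) (n q), p i) / L q) :=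
  stmt_9_general N p c M Q hQ n L hmono hlast hbig hLpos hbudget
end

section
/- Let N be a positive integer, α > 0, and let p_n = n^{−α} / Σ_{k=1}^{N} k^{−α} for n ∈ {1,…,N} be the Zipf popularity distribution. Let L > 0 and let L_1,…,L_N > 0 be per-file cache redundancies satisfying Σ_{n=1}^{N} L_n ≤ L·N. Then Σ_{n=1}^{N} p_n / L_n ≥ (1/(L·N)) · (Σ_{n=1}^{N} n^{−α/2})² / (Σ_{n=1}^{N} n^{−α}). Hence the minimum expected delivery time satisfies E{T*} ≥ (K(1−γ)/(L·N·(1+Λγ))) · (Σ_{q=1}^{N} q^{−α/2})² / (Σ_{q=1}^{N} q^{−α}). -/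
/-!
Cauchy–Schwarz in Engel form (Titu's lemma) with `f n = n^{-α/2}` and `g n = L_n` gives
`(∑ n^{-α/2})² / ∑ L_n ≤ ∑ n^{-α} / L_n`, and the budget `∑ L_n ≤ L·N` only decreases the left
side. Dividing by the Zipf normalisation `∑ k^{-α}` turns `n^{-α}` into `p_n`, and the delay
bound follows by multiplying with the nonnegative prefactor `K(1-γ)/(1+Λγ)`.
-/

open Finset

lemma Real.rpow_half_sq {x : ℝ} (hx : 0 ≤ x) (a : ℝ) : (x ^ (a / 2)) ^ 2 = x ^ a := by
  rw [← Real.rpow_natCast, ← Real.rpow_mul hx]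
  norm_num

theorem Finset.sq_sum_div_le_sum_sq_div_of_sum_le {ι R : Type*} [Field R] [LinearOrder R]
    [IsStrictOrderedRing R] {s : Finset ι} (hs : s.Nonempty)
    (f : ι → R) {g : ι → R} (hg : ∀ i ∈ s, 0 < g i) {B : R} (hB : ∑ i ∈ s, g i ≤ B) :
    (∑ i ∈ s, f i) ^ 2 / B ≤ ∑ i ∈ s, f i ^ 2 / g i :=
  calc (∑ i ∈ s, f i) ^ 2 / B ≤ (∑ i ∈ s, f i) ^ 2 / ∑ i ∈ s, g i :=
        div_le_div_of_nonneg_left (sq_nonneg _) (sum_pos hg hs) hB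
    _ ≤ ∑ i ∈ s, f i ^ 2 / g i := sq_sum_div_le_sum_sq_div s f hg

theorem Finset.sum_div_div_eq_sum_div_div {ι K : Type*} [Field K] (s : Finset ι) (w x : ι → K)
    (c : K) : ∑ i ∈ s, w i / c / x i = (∑ i ∈ s, w i / x i) / c := by
  rw [sum_div]
  exact sum_congr rfl fun i _ ↦ div_right_comm _ _ _

theorem sq_sum_rpow_half_div_le_sum_rpow_div {s : Finset ℕ} (hs : s.Nonempty) (a : ℝ)
    {x : ℕ → ℝ} (hx : ∀ n ∈ s, 0 < x n) {B : ℝ} (hB : ∑ n ∈ s, x n ≤ B) :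
    (∑ n ∈ s, (n : ℝ) ^ (a / 2)) ^ 2 / B ≤ ∑ n ∈ s, (n : ℝ) ^ a / x n := by
  simpa only [Real.rpow_half_sq (Nat.cast_nonneg _)] using
    sq_sum_div_le_sum_sq_div_of_sum_le hs (fun n : ℕ ↦ (n : ℝ) ^ (a / 2)) hx hB

theorem stmt_10_general (N : ℕ) (hN : 0 < N) (α : ℝ)
    (L : ℝ) (Lv : ℕ → ℝ) (hLv : ∀ n ∈ Finset.Icc 1 N, 0 < Lv n)
    (hbudget : ∑ n ∈ Finset.Icc 1 N, Lv n ≤ L * N) :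
    (1 / (L * N)) * ((∑ n ∈ Finset.Icc 1 N, (n : ℝ) ^ (-(α / 2))) ^ 2
        / ∑ n ∈ Finset.Icc 1 N, (n : ℝ) ^ (-α))
      ≤ (∑ n ∈ Finset.Icc 1 N,
          ((n : ℝ) ^ (-α) / ∑ k ∈ Finset.Icc 1 N, (k : ℝ) ^ (-α)) / Lv n) ∧
    ∀ K γ Λ : ℝ, 0 ≤ K * (1 - γ) / (1 + Λ * γ) →
      K * (1 - γ) / (L * N * (1 + Λ * γ)) *
          ((∑ q ∈ Finset.Icc 1 N, (q : ℝ) ^ (-(α / 2))) ^ 2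
            / ∑ q ∈ Finset.Icc 1 N, (q : ℝ) ^ (-α))
        ≤ K * (1 - γ) / (1 + Λ * γ) *
            ∑ n ∈ Finset.Icc 1 N,
              ((n : ℝ) ^ (-α) / ∑ k ∈ Finset.Icc 1 N, (k : ℝ) ^ (-α)) / Lv n := by
  set A := (∑ n ∈ Icc 1 N, (n : ℝ) ^ (-(α / 2))) ^ 2
  set S := ∑ k ∈ Icc 1 N, (k : ℝ) ^ (-α)
  have hS : 0 ≤ S := sum_nonneg fun k _ ↦ Real.rpow_nonneg (Nat.cast_nonneg k) _
  have hCS : A / (L * N) ≤ ∑ n ∈ Icc 1 N, (n : ℝ) ^ (-α) / Lv n := by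
    simpa only [A, neg_div] using
      sq_sum_rpow_half_div_le_sum_rpow_div (nonempty_Icc.mpr hN) (-α) hLv hbudget
  have hrate : 1 / (L * N) * (A / S) ≤ ∑ n ∈ Icc 1 N, (n : ℝ) ^ (-α) / S / Lv n := by
    rw [sum_div_div_eq_sum_div_div, one_div_mul_eq_div, div_right_comm]
    exact div_le_div_of_nonneg_right hCS hS
  refine ⟨hrate, fun K γ Λ hC ↦ ?_⟩
  calc K * (1 - γ) / (L * N * (1 + Λ * γ)) * (A / S)
      = K * (1 - γ) / (1 + Λ * γ) * (1 / (L * N) * (A / S)) := by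
        rw [mul_comm (L * (N : ℝ)), ← div_div]; ring
    _ ≤ _ := mul_le_mul_of_nonneg_left hrate hC

/-- Lower bound on the expected delivery time under Zipf popularity: for any per-file
redundancies `L n > 0` with `∑ n, L n ≤ L·N`, one has
`∑ n, p n / L n ≥ (1/(L·N)) (∑ n, n^{-α/2})² / (∑ n, n^{-α})`; hence the minimum expected
delay satisfies `E{T*} ≥ (K(1-γ)/(L·N·(1+Λγ))) (∑ q, q^{-α/2})² / (∑ q, q^{-α})`. -/
theorem stmt_10 (N : ℕ) (hN : 0 < N) (α : ℝ) (hα : 0 < α)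
    (L : ℝ) (hL : 0 < L) (Lv : ℕ → ℝ) (hLv : ∀ n ∈ Finset.Icc 1 N, 0 < Lv n)
    (hbudget : ∑ n ∈ Finset.Icc 1 N, Lv n ≤ L * N) :
    (1 / (L * N)) * ((∑ n ∈ Finset.Icc 1 N, (n : ℝ) ^ (-(α / 2))) ^ 2
        / ∑ n ∈ Finset.Icc 1 N, (n : ℝ) ^ (-α))
      ≤ (∑ n ∈ Finset.Icc 1 N,
          ((n : ℝ) ^ (-α) / ∑ k ∈ Finset.Icc 1 N, (k : ℝ) ^ (-α)) / Lv n) ∧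
    ∀ K γ Λ : ℝ, 0 ≤ K * (1 - γ) / (1 + Λ * γ) →
      K * (1 - γ) / (L * N * (1 + Λ * γ)) *
          ((∑ q ∈ Finset.Icc 1 N, (q : ℝ) ^ (-(α / 2))) ^ 2
            / ∑ q ∈ Finset.Icc 1 N, (q : ℝ) ^ (-α))
        ≤ K * (1 - γ) / (1 + Λ * γ) *
            ∑ n ∈ Finset.Icc 1 N,
              ((n : ℝ) ^ (-α) / ∑ k ∈ Finset.Icc 1 N, (k : ℝ) ^ (-α)) / Lv n :=
  stmt_10_general N hN α L Lv hLv hbudget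
end

section
/- Let N be a positive integer, α > 0, and let p_n = n^{−α} / Σ_{k=1}^{N} k^{−α} be the Zipf popularity distribution on {1,…,N}. Let L > 0 and let L_1,…,L_N > 0 satisfy Σ_{n=1}^{N} L_n ≤ L·N. Then the multiplicative gain over the uniform-popularity delay, namely the ratio (1/L) / (Σ_{n=1}^{N} p_n/L_n), is at most N · (Σ_{q=1}^{N} q^{−α}) / (Σ_{q=1}^{N} q^{−α/2})². That is, G_max ≤ N Σ_{q=1}^N q^{−α} / (Σ_{q=1}^N q^{−α/2})². -/
/-!
With weights `wₙ = n^{-α}` normalised to `pₙ = wₙ / S`, the Cauchy–Schwarz inequality (in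
Sedrakyan's form) gives `(∑ √wₙ)² ≤ (∑ Lₙ) · ∑ wₙ / Lₙ ≤ L N · ∑ wₙ / Lₙ`, i.e. the expected
delay factor `∑ pₙ / Lₙ` is at least `(∑ n^{-α/2})² / (L N S)`. Inverting yields the bound on
the gain `(1/L) / ∑ pₙ / Lₙ`.
-/

open Finset

variable {ι : Type*}

theorem sq_sum_le_mul_sum_sq_div (s : Finset ι) (f : ι → ℝ) {c : ι → ℝ} {B : ℝ}
    (hc : ∀ i ∈ s, 0 < c i) (hB : ∑ i ∈ s, c i ≤ B) :
    (∑ i ∈ s, f i) ^ 2 ≤ B * ∑ i ∈ s, f i ^ 2 / c i := by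
  have hterm : ∀ i ∈ s, 0 ≤ f i ^ 2 / c i := fun i hi => div_nonneg (sq_nonneg _) (hc i hi).le
  calc (∑ i ∈ s, f i) ^ 2 ≤ (∑ i ∈ s, c i) * ∑ i ∈ s, f i ^ 2 / c i :=
        sum_sq_le_sum_mul_sum_of_sq_le_mul s (fun i hi => (hc i hi).le) hterm
          fun i hi => (mul_div_cancel₀ _ (hc i hi).ne').ge
    _ ≤ B * ∑ i ∈ s, f i ^ 2 / c i := mul_le_mul_of_nonneg_right hB (sum_nonneg hterm)

theorem one_div_div_sum_normalized_div_le (s : Finset ι) (hs : s.Nonempty) {w f c : ι → ℝ}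
    {L : ℝ} (hL : 0 < L) (hf : ∀ i ∈ s, 0 < f i) (hfw : ∀ i ∈ s, f i ^ 2 = w i)
    (hc : ∀ i ∈ s, 0 < c i) (hbudget : ∑ i ∈ s, c i ≤ L * #s) :
    (1 / L) / ∑ i ∈ s, (w i / ∑ k ∈ s, w k) / c i
      ≤ #s * (∑ i ∈ s, w i) / (∑ i ∈ s, f i) ^ 2 := by
  set S := ∑ k ∈ s, w k
  set D := ∑ i ∈ s, w i / c i
  have hw : ∀ i ∈ s, 0 < w i := fun i hi => hfw i hi ▸ pow_pos (hf i hi) 2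
  have hS : 0 < S := sum_pos hw hs
  have hD : 0 < D := sum_pos (fun i hi => div_pos (hw i hi) (hc i hi)) hs
  have hT : 0 < ∑ i ∈ s, f i := sum_pos hf hs
  have hdelay : ∑ i ∈ s, (w i / S) / c i = D / S := by
    rw [sum_div]
    exact sum_congr rfl fun i _ => div_right_comm _ _ _
  have hCS : (∑ i ∈ s, f i) ^ 2 ≤ L * #s * D := by
    have h := sq_sum_le_mul_sum_sq_div s f hc hbudget
    rwa [sum_congr rfl fun i hi => congrArg (· / c i) (hfw i hi)] at h
  rw [hdelay, show 1 / L / (D / S) = S / (L * D) by field_simp,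
    div_le_div_iff₀ (by positivity) (by positivity)]
  calc S * (∑ i ∈ s, f i) ^ 2 ≤ S * (L * #s * D) := mul_le_mul_of_nonneg_left hCS hS.le
    _ = #s * S * (L * D) := by ring

theorem stmt_11_general (N : ℕ) (hN : 0 < N) (α : ℝ)
    (L : ℝ) (hL : 0 < L) (Lv : ℕ → ℝ) (hLv : ∀ n ∈ Finset.Icc 1 N, 0 < Lv n)
    (hbudget : ∑ n ∈ Finset.Icc 1 N, Lv n ≤ L * N) :
    (1 / L) / (∑ n ∈ Finset.Icc 1 N,
        ((n : ℝ) ^ (-α) / ∑ k ∈ Finset.Icc 1 N, (k : ℝ) ^ (-α)) / Lv n)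
      ≤ N * (∑ q ∈ Finset.Icc 1 N, (q : ℝ) ^ (-α))
          / (∑ q ∈ Finset.Icc 1 N, (q : ℝ) ^ (-(α / 2))) ^ 2 := by
  have hpos : ∀ n ∈ Icc 1 N, (0 : ℝ) < n := fun n hn => by
    exact_mod_cast (mem_Icc.mp hn).1
  have hsq : ∀ n ∈ Icc 1 N, ((n : ℝ) ^ (-(α / 2))) ^ 2 = (n : ℝ) ^ (-α) := fun n hn => by
    rw [← Real.rpow_mul_natCast (hpos n hn).le]
    ring_nf
  have h := one_div_div_sum_normalized_div_le (Icc 1 N) ⟨1, mem_Icc.mpr ⟨le_rfl, hN⟩⟩ hL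
    (fun n hn => Real.rpow_pos_of_pos (hpos n hn) _) hsq hLv (by simpa using hbudget)
  simpa using h

/-- Bound on the multiplicative gain over the uniform-popularity delay: under Zipf
popularity and any feasible per-file redundancies, the ratio `(1/L) / (∑ n, p n / L n)`
is at most `N (∑ q, q^{-α}) / (∑ q, q^{-α/2})²`. -/
theorem stmt_11 (N : ℕ) (hN : 0 < N) (α : ℝ) (hα : 0 < α)
    (L : ℝ) (hL : 0 < L) (Lv : ℕ → ℝ) (hLv : ∀ n ∈ Finset.Icc 1 N, 0 < Lv n)
    (hbudget : ∑ n ∈ Finset.Icc 1 N, Lv n ≤ L * N) :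
    (1 / L) / (∑ n ∈ Finset.Icc 1 N,
        ((n : ℝ) ^ (-α) / ∑ k ∈ Finset.Icc 1 N, (k : ℝ) ^ (-α)) / Lv n)
      ≤ N * (∑ q ∈ Finset.Icc 1 N, (q : ℝ) ^ (-α))
          / (∑ q ∈ Finset.Icc 1 N, (q : ℝ) ^ (-(α / 2))) ^ 2 :=
  stmt_11_general N hN α L hL Lv hLv hbudget
end

section
/- Let N ≥ 2 and Q ≥ 2 be integers, α > 0, and let p_n = n^{−α}/Σ_{k=1}^{N} k^{−α} be the Zipf popularity distribution on {1,…,N}. Let 0 = n_0 < n_1 < n_2 < ⋯ < n_Q = N be any consecutive library segmentation with all sub-libraries nonempty (so n_1 ≥ 1), and let π_q = Σ_{n=n_{q−1}+1}^{n_q} p_n. Then (Σ_{q=1}^{Q} √(π_q · (n_q − n_{q−1})))² < N. Consequently, any such segmentation, under the cache-redundancy allocation optimized over L, strictly improves the expected delivery time compared to the uniform-popularity case: (K(1−γ)/(L(1+Λγ))) · (Σ_{q=1}^{Q} √(π_q (n_q − n_{q−1})))²/N < K(1−γ)/(L(1+Λγ)). -/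
/-!
By Cauchy–Schwarz, `(∑_q √(π_q s_q))² ≤ (∑_q π_q)(∑_q s_q) = N` for the segment sizes
`s_q = n_q - n_{q-1}`, with equality only if `π_q = s_q / N` for every `q`. Zipf popularity is
strictly decreasing, so the first segment, which holds the `n_1 < N` most popular files,
carries more than its share `n_1 / N` of the popularity, and the inequality is strict.
-/

open Finset

lemma two_mul_sqrt_mul_le_add {x y : ℝ} (hx : 0 ≤ x) (hy : 0 ≤ y) :
    2 * √(x * y) ≤ x + y := by
  rw [Real.sqrt_mul hx]
  nlinarith [Real.sq_sqrt hx, Real.sq_sqrt hy, sq_nonneg (√x - √y)]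

lemma two_mul_sqrt_mul_lt_add {x y : ℝ} (hx : 0 ≤ x) (hy : 0 ≤ y) (hxy : x ≠ y) :
    2 * √(x * y) < x + y := by
  have hne : √x - √y ≠ 0 := sub_ne_zero.2 fun h => hxy ((Real.sqrt_inj hx hy).1 h)
  rw [Real.sqrt_mul hx]
  nlinarith [Real.sq_sqrt hx, Real.sq_sqrt hy, sq_pos_of_ne_zero hne]

lemma sq_sum_sqrt_mul_lt {ι : Type*} {s : Finset ι} {a b : ι → ℝ}
    (ha : ∀ i ∈ s, 0 ≤ a i) (hb : ∀ i ∈ s, 0 ≤ b i) {j : ι} (hj : j ∈ s)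
    (hj_ne : a j * ∑ i ∈ s, b i ≠ b j * ∑ i ∈ s, a i) :
    (∑ i ∈ s, √(a i * b i)) ^ 2 < (∑ i ∈ s, a i) * ∑ i ∈ s, b i := by
  set A := ∑ i ∈ s, a i
  set B := ∑ i ∈ s, b i
  have hA : 0 ≤ A := sum_nonneg ha
  have hB : 0 ≤ B := sum_nonneg hb
  have hAB : 0 < A * B := by
    refine lt_of_le_of_ne (mul_nonneg hA hB) fun h => hj_ne ?_
    rcases mul_eq_zero.1 h.symm with h | h
    · rw [h, (sum_eq_zero_iff_of_nonneg ha).1 h j hj]; ring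
    · rw [h, (sum_eq_zero_iff_of_nonneg hb).1 h j hj]; ring
  -- AM–GM for `a i * B` and `b i * A`, summed over `s`.
  have hsum : 2 * √(A * B) * ∑ i ∈ s, √(a i * b i) < 2 * (A * B) := by
    calc 2 * √(A * B) * ∑ i ∈ s, √(a i * b i)
        = ∑ i ∈ s, 2 * √(a i * B * (b i * A)) := by
          rw [mul_sum]
          refine sum_congr rfl fun i _ => ?_
          rw [show a i * B * (b i * A) = A * B * (a i * b i) by ring,
            Real.sqrt_mul hAB.le, mul_assoc]
      _ < ∑ i ∈ s, (a i * B + b i * A) := by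
          refine sum_lt_sum (fun i hi => two_mul_sqrt_mul_le_add
            (mul_nonneg (ha i hi) hB) (mul_nonneg (hb i hi) hA)) ⟨j, hj, ?_⟩
          exact two_mul_sqrt_mul_lt_add (mul_nonneg (ha j hj) hB) (mul_nonneg (hb j hj) hA) hj_ne
      _ = 2 * (A * B) := by rw [sum_add_distrib, ← sum_mul, ← sum_mul]; ring
  have hlt : ∑ i ∈ s, √(a i * b i) < √(A * B) := by
    nlinarith [Real.mul_self_sqrt hAB.le, Real.sqrt_pos.2 hAB]
  calc (∑ i ∈ s, √(a i * b i)) ^ 2 < √(A * B) ^ 2 :=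
        pow_lt_pow_left₀ hlt (sum_nonneg fun _ _ => Real.sqrt_nonneg _) two_ne_zero
    _ = A * B := Real.sq_sqrt hAB.le

lemma sum_Icc_sum_Ioc_of_monotoneOn {M : Type*} [AddCommMonoid M] (f : ℕ → M) {n : ℕ → ℕ}
    {Q : ℕ} (hn : MonotoneOn n (Set.Iic Q)) :
    ∑ q ∈ Icc 1 Q, ∑ i ∈ Ioc (n (q - 1)) (n q), f i = ∑ i ∈ Ioc (n 0) (n Q), f i := by
  induction Q with
  | zero => simp
  | succ Q ih =>
    have hQ : Q ∈ Set.Iic (Q + 1) := Set.mem_Iic.2 Q.le_succ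
    rw [sum_Icc_succ_top (Nat.le_add_left 1 Q),
      ih (hn.mono (Set.Iic_subset_Iic.2 Q.le_succ)), Nat.add_sub_cancel,
      sum_Ioc_consecutive _ (hn (Set.mem_Iic.2 (Nat.zero_le _)) hQ (Nat.zero_le Q))
        (hn hQ Set.self_mem_Iic Q.le_succ)]

lemma MonotoneOn.apply_sub_one_le {n : ℕ → ℕ} {Q : ℕ} (hn : MonotoneOn n (Set.Iic Q))
    {q : ℕ} (hq : q ∈ Icc 1 Q) : n (q - 1) ≤ n q :=
  hn (Set.mem_Iic.2 (by grind)) (Set.mem_Iic.2 (mem_Icc.1 hq).2) (Nat.sub_le q 1)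

lemma sum_Icc_sub_of_monotoneOn {n : ℕ → ℕ} {Q : ℕ} (hn : MonotoneOn n (Set.Iic Q)) :
    ∑ q ∈ Icc 1 Q, ((n q : ℝ) - n (q - 1)) = n Q - n 0 := by
  calc ∑ q ∈ Icc 1 Q, ((n q : ℝ) - n (q - 1))
      = ∑ q ∈ Icc 1 Q, ∑ i ∈ Ioc (n (q - 1)) (n q), (1 : ℝ) := sum_congr rfl fun q hq => by
        rw [sum_const, Nat.card_Ioc, nsmul_one, Nat.cast_sub (hn.apply_sub_one_le hq)]
    _ = n Q - n 0 := by
        rw [sum_Icc_sum_Ioc_of_monotoneOn _ hn, sum_const, Nat.card_Ioc, nsmul_one,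
          Nat.cast_sub (hn (Set.mem_Iic.2 (Nat.zero_le Q)) Set.self_mem_Iic (Nat.zero_le Q))]

lemma mul_sum_Ioc_lt_mul_sum_Ioc_of_strictAntiOn {f : ℕ → ℝ} {m N : ℕ}
    (hf : StrictAntiOn f (Set.Ioc 0 N)) (hm : 0 < m) (hmN : m < N) :
    (m : ℝ) * ∑ i ∈ Ioc 0 N, f i < N * ∑ i ∈ Ioc 0 m, f i := by
  have hm_mem : m ∈ Set.Ioc 0 N := ⟨hm, hmN.le⟩
  have hhead : (m : ℝ) * f m ≤ ∑ i ∈ Ioc 0 m, f i := by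
    have := card_nsmul_le_sum (Ioc 0 m) f (f m) fun i hi =>
      hf.antitoneOn ⟨(mem_Ioc.1 hi).1, (mem_Ioc.1 hi).2.trans hmN.le⟩ hm_mem (mem_Ioc.1 hi).2
    rwa [Nat.card_Ioc, Nat.sub_zero, nsmul_eq_mul] at this
  have htail : ∑ i ∈ Ioc m N, f i < ((N : ℝ) - m) * f m := by
    have := sum_lt_sum_of_nonempty ⟨N, mem_Ioc.2 ⟨hmN, le_rfl⟩⟩ fun i hi =>
      hf hm_mem ⟨hm.trans (mem_Ioc.1 hi).1, (mem_Ioc.1 hi).2⟩ (mem_Ioc.1 hi).1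
    rwa [sum_const, Nat.card_Ioc, nsmul_eq_mul, Nat.cast_sub hmN.le] at this
  rw [← sum_Ioc_consecutive f (Nat.zero_le m) hmN.le]
  have hm' : (0 : ℝ) < m := Nat.cast_pos.2 hm
  have hNm : (0 : ℝ) < N - m := sub_pos.2 (Nat.cast_lt.2 hmN)
  nlinarith [mul_lt_mul_of_pos_left htail hm', mul_le_mul_of_nonneg_left hhead hNm.le]

lemma strictAntiOn_natCast_rpow {α : ℝ} (hα : 0 < α) (N : ℕ) :
    StrictAntiOn (fun i : ℕ => (i : ℝ) ^ (-α)) (Set.Ioc 0 N) :=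
  fun _ hi _ _ hij =>
    Real.rpow_lt_rpow_of_neg (Nat.cast_pos.2 hi.1) (Nat.cast_lt.2 hij) (neg_neg_of_pos hα)

theorem stmt_12_general (N : ℕ) (Q : ℕ) (hQ : 2 ≤ Q) (α : ℝ) (hα : 0 < α)
    (n : ℕ → ℕ) (h0 : n 0 = 0) (hmono : ∀ q, q < Q → n q < n (q + 1)) (hlast : n Q = N)
    (π : ℕ → ℝ)
    (hπ : ∀ q, π q = ∑ i ∈ Finset.Ioc (n (q - 1)) (n q),
        ((i : ℝ) ^ (-α) / ∑ k ∈ Finset.Icc 1 N, (k : ℝ) ^ (-α))) :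
    ((∑ q ∈ Finset.Icc 1 Q, Real.sqrt (π q * ((n q : ℝ) - n (q - 1)))) ^ 2 < N) ∧
    ∀ K γ Λ L : ℝ, 0 < K * (1 - γ) / (L * (1 + Λ * γ)) →
      K * (1 - γ) / (L * (1 + Λ * γ)) *
          ((∑ q ∈ Finset.Icc 1 Q, Real.sqrt (π q * ((n q : ℝ) - n (q - 1)))) ^ 2 / N)
        < K * (1 - γ) / (L * (1 + Λ * γ)) := by
  have hn : MonotoneOn n (Set.Iic Q) := (strictMonoOn_Iic_of_lt_succ hmono).monotoneOn
  set f : ℕ → ℝ := fun i => (i : ℝ) ^ (-α)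
  set Z := ∑ k ∈ Icc 1 N, f k
  have hZ : Z = ∑ i ∈ Ioc 0 N, f i := by rw [← Icc_add_one_left_eq_Ioc, zero_add]
  have hn1 : 0 < n 1 := h0 ▸ hmono 0 (by omega)
  have hn1N : n 1 < N := hlast ▸ (hmono 1 (by omega)).trans_le
    (hn (Set.mem_Iic.2 hQ) Set.self_mem_Iic hQ)
  have hZ_pos : 0 < Z := sum_pos (fun k hk => Real.rpow_pos_of_pos
    (Nat.cast_pos.2 (mem_Icc.1 hk).1) _) ⟨1, mem_Icc.2 ⟨le_rfl, by omega⟩⟩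
  have hπ_sum : ∑ q ∈ Icc 1 Q, π q = 1 := by
    simp_rw [hπ, ← sum_div]
    rw [sum_Icc_sum_Ioc_of_monotoneOn _ hn, h0, hlast, ← hZ, div_self hZ_pos.ne']
  have hfirst : (n 1 : ℝ) < π 1 * N := by
    rw [hπ 1, ← sum_div, div_mul_eq_mul_div, lt_div_iff₀ hZ_pos, h0, mul_comm _ (N : ℝ), hZ]
    exact mul_sum_Ioc_lt_mul_sum_Ioc_of_strictAntiOn (strictAntiOn_natCast_rpow hα N) hn1 hn1N
  have hπ_nonneg : ∀ q ∈ Icc 1 Q, 0 ≤ π q := fun q _ =>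
    hπ q ▸ sum_nonneg fun i _ => div_nonneg (Real.rpow_nonneg i.cast_nonneg _) hZ_pos.le
  have hsize_nonneg : ∀ q ∈ Icc 1 Q, (0 : ℝ) ≤ n q - n (q - 1) := fun q hq =>
    sub_nonneg.2 (Nat.cast_le.2 (hn.apply_sub_one_le hq))
  have hmain := sq_sum_sqrt_mul_lt hπ_nonneg hsize_nonneg (mem_Icc.2 ⟨le_rfl, by omega⟩)
    (by rw [sum_Icc_sub_of_monotoneOn hn, hπ_sum, hlast]; simpa [h0] using hfirst.ne')
  rw [hπ_sum, one_mul, sum_Icc_sub_of_monotoneOn hn, h0, hlast, Nat.cast_zero, sub_zero] at hmain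
  exact ⟨hmain, fun K γ Λ L hpos =>
    mul_lt_of_lt_one_right hpos ((div_lt_one (Nat.cast_pos.2 (hn1.trans hn1N))).2 hmain)⟩

/-- Under Zipf popularity, any consecutive library segmentation into `Q ≥ 2` nonempty
sub-libraries satisfies `(∑_{q=1}^{Q} √(π_q (n_q - n_{q-1})))² < N`; consequently, with
the cache-redundancy allocation optimized over `L`, the resulting expected delivery time
strictly improves upon the uniform-popularity delay `K(1-γ)/(L(1+Λγ))`. -/
theorem stmt_12 (N : ℕ) (hN : 2 ≤ N) (Q : ℕ) (hQ : 2 ≤ Q) (α : ℝ) (hα : 0 < α)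
    (n : ℕ → ℕ) (h0 : n 0 = 0) (hmono : ∀ q, q < Q → n q < n (q + 1)) (hlast : n Q = N)
    (π : ℕ → ℝ)
    (hπ : ∀ q, π q = ∑ i ∈ Finset.Ioc (n (q - 1)) (n q),
        ((i : ℝ) ^ (-α) / ∑ k ∈ Finset.Icc 1 N, (k : ℝ) ^ (-α))) :
    ((∑ q ∈ Finset.Icc 1 Q, Real.sqrt (π q * ((n q : ℝ) - n (q - 1)))) ^ 2 < N) ∧
    ∀ K γ Λ L : ℝ, 0 < K * (1 - γ) / (L * (1 + Λ * γ)) →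
      K * (1 - γ) / (L * (1 + Λ * γ)) *
          ((∑ q ∈ Finset.Icc 1 Q, Real.sqrt (π q * ((n q : ℝ) - n (q - 1)))) ^ 2 / N)
        < K * (1 - γ) / (L * (1 + Λ * γ)) :=
  stmt_12_general N Q hQ α hα n h0 hmono hlast π hπ
end
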